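/- Performance difference lemma (policy improvement): for two stationary policies π and π' in a finite discounted MDP with discount γ ∈ [0,1), V^π(s) - V^{π'}(s) = (1/(1-γ))·E_{(s',a')∼d^π_s}[A^{π'}(s',a')], where d^π_s is the normalized discounted state-action occupancy measure of π started from s, and A^{π'}(s,a) = Q^{π'}(s,a) - V^{π'}(s) is the advantage function of π'. -/

import Mathlib

open Finset

variable {S A : Type*}

/-- One step of the state-distribution evolution under kernel `T` and policy `π`. -/
noncomputable def stepDist [Fintype S] [Fintype A]
    (T : S → A → S → ℝ) (π : S → A → ℝ) (p : S → ℝ) : S → ℝ :=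
  fun s' => ∑ s, ∑ a, p s * π s a * T s a s'

/-- State distribution at time `t` starting from `μ0`. -/
noncomputable def stateDist [Fintype S] [Fintype A]
    (T : S → A → S → ℝ) (π : S → A → ℝ) (μ0 : S → ℝ) : ℕ → S → ℝ :=
  fun t => (stepDist T π)^[t] μ0

/-- Dirac initial distribution at `s`. -/
noncomputable def dirac [DecidableEq S] (s : S) : S → ℝ :=
  fun s' => if s' = s then 1 else 0

/-- Value function `V^π(s)`. -/
noncomputable def Vfun [Fintype S] [Fintype A] [DecidableEq S]
    (T : S → A → S → ℝ) (π : S → A → ℝ) (r : S → A → ℝ) (γ : ℝ) : S → ℝ :=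
  fun s => ∑' t : ℕ, γ ^ t * ∑ s', ∑ a, stateDist T π (dirac s) t s' * π s' a * r s' a

/-- State-action value function `Q^π(s,a) = r(s,a) + γ E_{s'∼T}[V^π(s')]`. -/
noncomputable def Qfun [Fintype S] [Fintype A] [DecidableEq S]
    (T : S → A → S → ℝ) (π : S → A → ℝ) (r : S → A → ℝ) (γ : ℝ) : S → A → ℝ :=
  fun s a => r s a + γ * ∑ s', T s a s' * Vfun T π r γ s'

/-- Normalized discounted state-action occupancy measure started from state `s`. -/
noncomputable def occFrom [Fintype S] [Fintype A] [DecidableEq S]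
    (T : S → A → S → ℝ) (π : S → A → ℝ) (γ : ℝ) (s : S) : S → A → ℝ :=
  fun s' a' => (1 - γ) * ∑' t : ℕ, γ ^ t * stateDist T π (dirac s) t s' * π s' a'

/-
Write `A^{π'}(s,a) = r(s,a) + (γ·E_{s'∼T(·|s,a)}[V(s')] - V(s))` with `V = V^{π'}`. Along the
trajectory of `π`, the expectation of the bracket at time `t` is `γ·g_{t+1} - g_t` with
`g_t = E_π[V(s_t)]`, so its discounted sum telescopes to `-V(s)`, while that of `r` is `V^π(s)`.
This works for every `V : S → ℝ`, and all the series converge because the state distributions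
of `π` remain probability vectors.
-/

lemma apply_le_one_of_sum_eq_one {ι : Type*} [Fintype ι] {w : ι → ℝ}
    (hw0 : ∀ i, 0 ≤ w i) (hw1 : ∑ i, w i = 1) (i : ι) : w i ≤ 1 :=
  hw1 ▸ single_le_sum (fun j _ => hw0 j) (mem_univ i)

lemma abs_sum_mul_le_sum_abs {ι : Type*} [Fintype ι] {w : ι → ℝ}
    (hw0 : ∀ i, 0 ≤ w i) (hw1 : ∑ i, w i = 1) (f : ι → ℝ) :
    |∑ i, w i * f i| ≤ ∑ i, |f i| :=
  (abs_sum_le_sum_abs _ _).trans <| sum_le_sum fun i _ => by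
    rw [abs_mul, abs_of_nonneg (hw0 i)]
    exact mul_le_of_le_one_left (abs_nonneg _) (apply_le_one_of_sum_eq_one hw0 hw1 i)

lemma summable_pow_mul_of_abs_le {γ : ℝ} (hγ0 : 0 ≤ γ) (hγ1 : γ < 1) {c : ℕ → ℝ} {C : ℝ}
    (hc : ∀ t, |c t| ≤ C) : Summable fun t => γ ^ t * c t :=
  ((summable_geometric_of_lt_one hγ0 hγ1).mul_left C).of_norm_bounded fun t => by
    rw [Real.norm_eq_abs, abs_mul, abs_pow, abs_of_nonneg hγ0, mul_comm]
    exact mul_le_mul_of_nonneg_right (hc t) (pow_nonneg hγ0 t)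

lemma tsum_succ_sub_eq_neg {h : ℕ → ℝ} (hh : Summable h) :
    ∑' t, (h (t + 1) - h t) = -h 0 := by
  have hh' : Summable fun t => h (t + 1) := (summable_nat_add_iff 1).mpr hh
  rw [hh'.tsum_sub hh, hh.tsum_eq_zero_add]
  ring

structure IsStochastic {α β : Type*} [Fintype β] (P : α → β → ℝ) : Prop where
  nonneg : ∀ a b, 0 ≤ P a b
  sum_eq_one : ∀ a, ∑ b, P a b = 1

section StateDist

variable [Fintype S] [Fintype A]

lemma stateDist_zero (T : S → A → S → ℝ) (π : S → A → ℝ) (μ0 : S → ℝ) :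
    stateDist T π μ0 0 = μ0 := rfl

lemma stateDist_succ (T : S → A → S → ℝ) (π : S → A → ℝ) (μ0 : S → ℝ) (t : ℕ) :
    stateDist T π μ0 (t + 1) = stepDist T π (stateDist T π μ0 t) :=
  Function.iterate_succ_apply' _ _ _

lemma sum_stepDist_mul (T : S → A → S → ℝ) (π : S → A → ℝ) (p f : S → ℝ) :
    ∑ s', stepDist T π p s' * f s' = ∑ s, ∑ a, p s * π s a * ∑ s', T s a s' * f s' := by
  simp only [stepDist, sum_mul, mul_sum]
  rw [sum_comm]
  refine sum_congr rfl fun s _ => ?_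
  rw [sum_comm]
  exact sum_congr rfl fun a _ => sum_congr rfl fun s' _ => by ring

variable {T : S → A → S → ℝ} {π : S → A → ℝ}

lemma sum_stepDist (hπ : IsStochastic π) (hT : ∀ s, IsStochastic (T s)) (p : S → ℝ) :
    ∑ s', stepDist T π p s' = ∑ s, p s := by
  simpa [(hT _).sum_eq_one, ← mul_sum, hπ.sum_eq_one] using sum_stepDist_mul T π p 1

lemma stateDist_nonneg (hπ : IsStochastic π) (hT : ∀ s, IsStochastic (T s))
    {μ0 : S → ℝ} (hμ0 : ∀ s, 0 ≤ μ0 s) (t : ℕ) (s' : S) : 0 ≤ stateDist T π μ0 t s' := by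
  induction t generalizing s' with
  | zero => exact hμ0 s'
  | succ t ih =>
    rw [stateDist_succ]
    exact sum_nonneg fun s _ => sum_nonneg fun a _ =>
      mul_nonneg (mul_nonneg (ih s) (hπ.nonneg s a)) ((hT s).nonneg a s')

lemma sum_stateDist (hπ : IsStochastic π) (hT : ∀ s, IsStochastic (T s))
    (μ0 : S → ℝ) (t : ℕ) : ∑ s', stateDist T π μ0 t s' = ∑ s, μ0 s := by
  induction t with
  | zero => rfl
  | succ t ih =>
    rw [stateDist_succ, sum_stepDist hπ hT, ih]

end StateDist

section Dirac

variable [DecidableEq S]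

lemma dirac_nonneg (s s' : S) : 0 ≤ dirac s s' := by
  unfold dirac; split_ifs <;> norm_num

lemma sum_dirac_mul [Fintype S] (s : S) (f : S → ℝ) : ∑ s', dirac s s' * f s' = f s := by
  simp [dirac]

lemma sum_dirac [Fintype S] (s : S) : ∑ s', dirac s s' = 1 := by
  simpa using sum_dirac_mul s 1

end Dirac

section Expectation

variable [Fintype S] [Fintype A] [DecidableEq S] {T : S → A → S → ℝ} {π : S → A → ℝ} {γ : ℝ}

/-- `E_π[f(s_t, a_t) | s_0 = s]`. -/
noncomputable def expectationAt (T : S → A → S → ℝ) (π : S → A → ℝ) (s : S)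
    (f : S → A → ℝ) (t : ℕ) : ℝ :=
  ∑ s', ∑ a, stateDist T π (dirac s) t s' * π s' a * f s' a

lemma Vfun_eq_tsum (T : S → A → S → ℝ) (π : S → A → ℝ) (f : S → A → ℝ) (γ : ℝ) (s : S) :
    Vfun T π f γ s = ∑' t, γ ^ t * expectationAt T π s f t := rfl

variable (T π) in
lemma expectationAt_add (s : S) (f g : S → A → ℝ) (t : ℕ) :
    expectationAt T π s (fun s' a => f s' a + g s' a) t
      = expectationAt T π s f t + expectationAt T π s g t := by
  simp only [expectationAt, mul_add, sum_add_distrib]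

variable (T π) in
lemma expectationAt_const_mul_sub (s : S) (c : ℝ) (f g : S → A → ℝ) (t : ℕ) :
    expectationAt T π s (fun s' a => c * f s' a - g s' a) t
      = c * expectationAt T π s f t - expectationAt T π s g t := by
  simp only [expectationAt, mul_sub, sum_sub_distrib, mul_sum, mul_left_comm]

lemma expectationAt_state (hπ : IsStochastic π) (s : S) (V : S → ℝ) (t : ℕ) :
    expectationAt T π s (fun s' _ => V s') t = ∑ s', stateDist T π (dirac s) t s' * V s' :=
  sum_congr rfl fun s' _ => by rw [← sum_mul, ← mul_sum, hπ.sum_eq_one, mul_one]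

lemma expectationAt_state_zero (hπ : IsStochastic π) (s : S) (V : S → ℝ) :
    expectationAt T π s (fun s' _ => V s') 0 = V s := by
  rw [expectationAt_state hπ, stateDist_zero, sum_dirac_mul]

lemma expectationAt_state_succ (hπ : IsStochastic π) (s : S) (V : S → ℝ) (t : ℕ) :
    expectationAt T π s (fun s' _ => V s') (t + 1)
      = expectationAt T π s (fun s' a => ∑ s'', T s' a s'' * V s'') t := by
  rw [expectationAt_state hπ, stateDist_succ, sum_stepDist_mul]
  rfl

lemma sum_stateDist_dirac (hπ : IsStochastic π) (hT : ∀ s, IsStochastic (T s)) (s : S)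
    (t : ℕ) : ∑ s', stateDist T π (dirac s) t s' = 1 :=
  (sum_stateDist hπ hT _ t).trans (sum_dirac s)

lemma abs_expectationAt_le (hπ : IsStochastic π) (hT : ∀ s, IsStochastic (T s)) (s : S)
    (f : S → A → ℝ) (t : ℕ) : |expectationAt T π s f t| ≤ ∑ s', ∑ a, |f s' a| := by
  calc |expectationAt T π s f t|
      = |∑ s', stateDist T π (dirac s) t s' * ∑ a, π s' a * f s' a| := by
        simp only [expectationAt, mul_sum, mul_assoc]
    _ ≤ ∑ s', |∑ a, π s' a * f s' a| :=
        abs_sum_mul_le_sum_abs (stateDist_nonneg hπ hT (dirac_nonneg s) t)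
          (sum_stateDist_dirac hπ hT s t) _
    _ ≤ ∑ s', ∑ a, |f s' a| :=
        sum_le_sum fun s' _ => abs_sum_mul_le_sum_abs (hπ.nonneg s') (hπ.sum_eq_one s') _

lemma summable_pow_mul_expectationAt (hγ0 : 0 ≤ γ) (hγ1 : γ < 1) (hπ : IsStochastic π)
    (hT : ∀ s, IsStochastic (T s)) (s : S) (f : S → A → ℝ) :
    Summable fun t => γ ^ t * expectationAt T π s f t :=
  summable_pow_mul_of_abs_le hγ0 hγ1 (abs_expectationAt_le hπ hT s f)

lemma Vfun_add (hγ0 : 0 ≤ γ) (hγ1 : γ < 1) (hπ : IsStochastic π)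
    (hT : ∀ s, IsStochastic (T s)) (s : S) (f g : S → A → ℝ) :
    Vfun T π (fun s' a => f s' a + g s' a) γ s = Vfun T π f γ s + Vfun T π g γ s := by
  simp only [Vfun_eq_tsum, expectationAt_add, mul_add]
  exact (summable_pow_mul_expectationAt hγ0 hγ1 hπ hT s f).tsum_add
    (summable_pow_mul_expectationAt hγ0 hγ1 hπ hT s g)

lemma Vfun_bellman_residual (hγ0 : 0 ≤ γ) (hγ1 : γ < 1) (hπ : IsStochastic π)
    (hT : ∀ s, IsStochastic (T s)) (s : S) (V : S → ℝ) :
    Vfun T π (fun s' a => γ * ∑ s'', T s' a s'' * V s'' - V s') γ s = -V s := by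
  set g : ℕ → ℝ := fun t => γ ^ t * expectationAt T π s (fun s' _ => V s') t
  have htelescope : ∀ t, γ ^ t * expectationAt T π s
      (fun s' a => γ * ∑ s'', T s' a s'' * V s'' - V s') t = g (t + 1) - g t := by
    intro t
    rw [expectationAt_const_mul_sub T π s γ (fun s' a => ∑ s'', T s' a s'' * V s'')
      (fun s' _ => V s'), ← expectationAt_state_succ hπ]
    simp only [g, pow_succ]
    ring
  rw [Vfun_eq_tsum, tsum_congr htelescope,
    tsum_succ_sub_eq_neg (summable_pow_mul_expectationAt hγ0 hγ1 hπ hT s _)]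
  simp only [pow_zero, one_mul, expectationAt_state_zero hπ]

lemma sum_occFrom_mul (hγ0 : 0 ≤ γ) (hγ1 : γ < 1) (hπ : IsStochastic π)
    (hT : ∀ s, IsStochastic (T s)) (s : S) (f : S → A → ℝ) :
    ∑ s', ∑ a, occFrom T π γ s s' a * f s' a = (1 - γ) * Vfun T π f γ s := by
  have hsummable : ∀ s' a,
      Summable fun t => γ ^ t * stateDist T π (dirac s) t s' * π s' a * f s' a := by
    intro s' a
    have hweight : ∀ t, 0 ≤ stateDist T π (dirac s) t s' * π s' a ∧
        stateDist T π (dirac s) t s' * π s' a ≤ 1 := fun t =>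
      ⟨mul_nonneg (stateDist_nonneg hπ hT (dirac_nonneg s) t s') (hπ.nonneg s' a),
        mul_le_one₀ (apply_le_one_of_sum_eq_one (stateDist_nonneg hπ hT (dirac_nonneg s) t)
          (sum_stateDist_dirac hπ hT s t) s') (hπ.nonneg s' a)
          (apply_le_one_of_sum_eq_one (hπ.nonneg s') (hπ.sum_eq_one s') a)⟩
    refine (summable_pow_mul_of_abs_le hγ0 hγ1 (C := |f s' a|)
      (c := fun t => stateDist T π (dirac s) t s' * π s' a * f s' a) fun t => ?_).congr
      fun t => by ring
    rw [abs_mul, abs_of_nonneg (hweight t).1]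
    exact mul_le_of_le_one_left (abs_nonneg _) (hweight t).2
  calc ∑ s', ∑ a, occFrom T π γ s s' a * f s' a
      = (1 - γ) * ∑ s', ∑ a, ∑' t, γ ^ t * stateDist T π (dirac s) t s' * π s' a * f s' a := by
        simp only [mul_sum]
        refine sum_congr rfl fun s' _ => sum_congr rfl fun a _ => ?_
        simp only [occFrom]
        rw [mul_assoc, ← tsum_mul_right]
    _ = (1 - γ) * ∑' t, ∑ s', ∑ a, γ ^ t * stateDist T π (dirac s) t s' * π s' a * f s' a := by
        rw [Summable.tsum_finsetSum fun s' _ => summable_sum fun a _ => hsummable s' a]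
        exact congrArg _ <| sum_congr rfl fun s' _ =>
          (Summable.tsum_finsetSum fun a _ => hsummable s' a).symm
    _ = (1 - γ) * Vfun T π f γ s := by
        simp only [Vfun_eq_tsum, expectationAt, mul_sum, mul_assoc]

end Expectation

theorem performance_difference_lemma_general [Fintype S] [Fintype A] [DecidableEq S]
    (T : S → A → S → ℝ) (π π' : S → A → ℝ) (r : S → A → ℝ) (γ : ℝ)
    (hγ0 : 0 ≤ γ) (hγ1 : γ < 1)
    (hπ0 : ∀ s a, 0 ≤ π s a) (hπ1 : ∀ s, ∑ a, π s a = 1)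
    (hT0 : ∀ s a s', 0 ≤ T s a s') (hT1 : ∀ s a, ∑ s', T s a s' = 1) :
    ∀ s : S, Vfun T π r γ s - Vfun T π' r γ s
      = (1 / (1 - γ)) * ∑ s', ∑ a',
          occFrom T π γ s s' a' * (Qfun T π' r γ s' a' - Vfun T π' r γ s') := by
  intro s
  have hπ : IsStochastic π := ⟨hπ0, hπ1⟩
  have hT : ∀ s, IsStochastic (T s) := fun s => ⟨hT0 s, hT1 s⟩
  set V' := Vfun T π' r γ
  have hadvantage : (fun s' a' => Qfun T π' r γ s' a' - V' s')
      = fun s' a' => r s' a' + (γ * ∑ s'', T s' a' s'' * V' s'' - V' s') := by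
    funext s' a'
    exact add_sub_assoc _ _ _
  rw [sum_occFrom_mul hγ0 hγ1 hπ hT s (fun s' a' => Qfun T π' r γ s' a' - V' s'), hadvantage,
    Vfun_add hγ0 hγ1 hπ hT, Vfun_bellman_residual hγ0 hγ1 hπ hT, one_div,
    inv_mul_cancel_left₀ (sub_ne_zero.mpr hγ1.ne'), sub_eq_add_neg]

/-- Performance difference lemma: `V^π(s) - V^{π'}(s)` equals `1/(1-γ)` times the
expected advantage of `π'` under the occupancy measure of `π` started at `s`. -/
theorem performance_difference_lemma [Fintype S] [Fintype A] [DecidableEq S]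
    (T : S → A → S → ℝ) (π π' : S → A → ℝ) (r : S → A → ℝ) (γ : ℝ)
    (hγ0 : 0 ≤ γ) (hγ1 : γ < 1)
    (hπ0 : ∀ s a, 0 ≤ π s a) (hπ1 : ∀ s, ∑ a, π s a = 1)
    (hπ'0 : ∀ s a, 0 ≤ π' s a) (hπ'1 : ∀ s, ∑ a, π' s a = 1)
    (hT0 : ∀ s a s', 0 ≤ T s a s') (hT1 : ∀ s a, ∑ s', T s a s' = 1) :
    ∀ s : S, Vfun T π r γ s - Vfun T π' r γ s
      = (1 / (1 - γ)) * ∑ s', ∑ a',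
          occFrom T π γ s s' a' * (Qfun T π' r γ s' a' - Vfun T π' r γ s') :=
  performance_difference_lemma_general T π π' r γ hγ0 hγ1 hπ0 hπ1 hT0 hT1
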